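/- Define Q₂(τ₁,τ₂) = -q/(conj(τ₁) - τ₂) + iq/(2v₁) with v₁ = Im(τ₁). Then for every g = [[a,b],[c,d]] in SL(2,ℝ), Q₂(gτ₁, gτ₂) = (c·conj(τ₁)+d)²·Q₂(τ₁, τ₂). -/

import Mathlib

/-!
For real `a, b, c, d` with `ad - bc = 1` one has `g z - g w = (z - w) / ((c z + d) (c w + d))`.
Applied to `(conj τ₁, τ₂)` it rescales the first term of `Q₂` by `(c conj τ₁ + d) (c τ₂ + d)`;
applied to `(τ₁, conj τ₁)`, via `2 i Im z = z - conj z`, it rescales `1 / Im τ₁` by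
`(c τ₁ + d) (c conj τ₁ + d)`. Against the target factor `(c conj τ₁ + d)²` the two terms are off
by `q c` and `-q c`, which cancel.
-/

open Complex

/-- The auxiliary function `Q₂`. -/
noncomputable def Q₂ (q : ℂ) (τ₁ τ₂ : ℂ) : ℂ :=
  -(q / ((starRingEnd ℂ) τ₁ - τ₂)) + Complex.I * q / (2 * (τ₁.im : ℂ))

open ComplexConjugate

section Mobius

variable {K : Type*} [Field K]

def mobius (a b c d z : K) : K := (a * z + b) / (c * z + d)

theorem mobius_sub_mobius (a b c d : K) {z w : K} (hz : c * z + d ≠ 0) (hw : c * w + d ≠ 0) :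
    mobius a b c d z - mobius a b c d w
      = (a * d - b * c) * (z - w) / ((c * z + d) * (c * w + d)) := by
  rw [mobius, mobius, div_sub_div _ _ hz hw]
  ring

end Mobius

theorem ofReal_mul_add_ofReal_ne_zero {c d : ℝ} (hcd : c ≠ 0 ∨ d ≠ 0) {z : ℂ} (hz : z.im ≠ 0) :
    (c : ℂ) * z + d ≠ 0 := by
  intro h
  have him : c * z.im = 0 := by simpa using congrArg im h
  have hc : c = 0 := (mul_eq_zero.mp him).resolve_right hz
  have hd : d = 0 := by simpa [hc] using congrArg re h
  exact hcd.elim (· hc) (· hd)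

theorem conj_mobius_ofReal (a b c d : ℝ) (z : ℂ) :
    conj (mobius (a : ℂ) b c d z) = mobius (a : ℂ) b c d (conj z) := by
  simp [mobius, map_div₀]

theorem ofReal_im_mobius_ofReal {a b c d : ℝ} (hcd : c ≠ 0 ∨ d ≠ 0) {z : ℂ} (hz : z.im ≠ 0) :
    ((mobius (a : ℂ) b c d z).im : ℂ)
      = (a * d - b * c) * z.im / ((c * z + d) * (c * conj z + d)) := by
  have hz' : (conj z).im ≠ 0 := by simpa using hz
  have hdiff := mobius_sub_mobius (a : ℂ) b c d (ofReal_mul_add_ofReal_ne_zero hcd hz)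
    (ofReal_mul_add_ofReal_ne_zero hcd hz')
  rw [← conj_mobius_ofReal, sub_conj, sub_conj] at hdiff
  push_cast at hdiff
  have h2I : (2 : ℂ) * I ≠ 0 := by simp
  apply mul_left_cancel₀ h2I
  linear_combination hdiff

/-- anti-holomorphic weight-2 covariance of `Q₂` in the first
variable under the diagonal Möbius action of `SL(2,ℝ)`. -/
theorem Q₂_weight_two_covariance
    (q : ℂ) (a b c d : ℝ) (hdet : a * d - b * c = 1)
    (τ₁ τ₂ : ℂ) (h₁ : 0 < τ₁.im) (h₂ : 0 < τ₂.im) :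
    Q₂ q (((a : ℂ) * τ₁ + b) / ((c : ℂ) * τ₁ + d))
         (((a : ℂ) * τ₂ + b) / ((c : ℂ) * τ₂ + d))
      = ((c : ℂ) * (starRingEnd ℂ) τ₁ + d) ^ 2 * Q₂ q τ₁ τ₂ := by
  have hcd : c ≠ 0 ∨ d ≠ 0 := by
    by_contra! h
    simp [h.1, h.2] at hdet
  have hdetC : (a : ℂ) * d - b * c = 1 := by exact_mod_cast hdet
  have hv : (τ₁.im : ℂ) ≠ 0 := by exact_mod_cast h₁.ne'
  have hsep : conj τ₁ - τ₂ ≠ 0 := fun h ↦ by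
    have him := congrArg im h
    simp only [sub_im, conj_im, zero_im] at him
    linarith
  have hd₁ := ofReal_mul_add_ofReal_ne_zero hcd h₁.ne'
  have hd₂ := ofReal_mul_add_ofReal_ne_zero hcd h₂.ne'
  have hd₁' := ofReal_mul_add_ofReal_ne_zero (z := conj τ₁) hcd (by simpa using h₁.ne')
  change Q₂ q (mobius (a : ℂ) b c d τ₁) (mobius (a : ℂ) b c d τ₂) = _
  rw [Q₂, Q₂, conj_mobius_ofReal, mobius_sub_mobius _ _ _ _ hd₁' hd₂,
    ofReal_im_mobius_ofReal hcd h₁.ne', hdetC]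
  have hτ₁ : τ₁ = conj τ₁ + 2 * τ₁.im * I := by
    rw [← sub_eq_iff_eq_add', sub_conj]
    push_cast
    ring
  field_simp
  linear_combination q * c * (c * conj τ₁ + d) * (conj τ₁ - τ₂) * (I * hτ₁ + 2 * τ₁.im * I_mul_I)
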